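/- Let L be a principally generated C-lattice that is a lattice domain, let m be a maximal element of L and x a principal element with 0 < m·m ≤ x < m (i.e., m² ≤ x, x ≤ m, x ≠ m, m² ≠ 0). Then m = (x : m); in particular m is a divisorial element. -/

import Mathlib

/-- A multiplicative lattice: a complete lattice (bottom `⊥` playing the role of `0`)
which is a commutative monoid whose identity `1` is the top element, and in which
multiplication distributes over arbitrary joins. -/
class MulLattice (L : Type*) extends CompleteLattice L, CommMonoid L where
  one_eq_top : (1 : L) = ⊤
  mul_sSup : ∀ (a : L) (S : Set L), a * sSup S = ⨆ b ∈ S, a * b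

namespace MulLattice

variable {L : Type*} [MulLattice L]

/-- The residual `(y : x) = ⋁ {a | a * x ≤ y}`. -/
def res (y x : L) : L := sSup {a : L | a * x ≤ y}

/-- `x` is meet-principal: `y ⊓ z * x = ((y : x) ⊓ z) * x` for all `y, z`. -/
def IsMeetPrincipal (x : L) : Prop := ∀ y z : L, y ⊓ z * x = (res y x ⊓ z) * x

/-- `x` is join-principal: `y ⊔ (z : x) = ((y * x ⊔ z) : x)` for all `y, z`. -/
def IsJoinPrincipal (x : L) : Prop := ∀ y z : L, y ⊔ res z x = res (y * x ⊔ z) x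

/-- `x` is principal if it is both meet-principal and join-principal. -/
def IsPrincipal (x : L) : Prop := IsMeetPrincipal x ∧ IsJoinPrincipal x

/-- A prime element: a proper element `p` with `x * y ≤ p → x ≤ p ∨ y ≤ p`. -/
def IsPrime (p : L) : Prop := p ≠ 1 ∧ ∀ x y : L, x * y ≤ p → x ≤ p ∨ y ≤ p

/-- A maximal element: an element maximal in `L - {1}`. -/
def IsMaximal (m : L) : Prop := m ≠ 1 ∧ ∀ b : L, m < b → b = 1

end MulLattice

/-- The December 2024 Mathlib definition of a compact element of a complete lattice
(Mathlib has since renamed `IsCompactElement` to the root namespace and restated it via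
directed sets); kept here with its old meaning. -/
def CompleteLattice.IsCompactElement {α : Type*} [CompleteLattice α] (k : α) : Prop :=
  ∀ s : Set α, k ≤ sSup s → ∃ t : Finset α, ↑t ⊆ s ∧ k ≤ t.sup id

/-- A principally generated C-lattice: a multiplicative lattice in which `1` is compact,
compact elements are closed under multiplication, every element is a join of compact
elements and every element is a join of principal elements. -/
class PGCLattice (L : Type*) extends MulLattice L where
  top_isCompact : CompleteLattice.IsCompactElement (⊤ : L)
  compact_mul : ∀ a b : L, CompleteLattice.IsCompactElement a →
    CompleteLattice.IsCompactElement b → CompleteLattice.IsCompactElement (a * b)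
  compactly_generated : ∀ a : L,
    a = sSup {c : L | CompleteLattice.IsCompactElement c ∧ c ≤ a}
  principally_generated : ∀ a : L,
    a = sSup {x : L | MulLattice.IsPrincipal x ∧ x ≤ a}

namespace MulLattice

variable {L : Type*}

/-- A lattice domain: `0 = ⊥` is a prime element. -/
def IsLatticeDomain (L : Type*) [MulLattice L] : Prop := IsPrime (⊥ : L)

variable [PGCLattice L]

open Classical in
/-- The divisorial (`v`-)closure of `a`: equals `(x : (x : a))` for a nonzero principal
`x ≤ a` when such an `x` exists (in a lattice domain this is independent of the choice
of `x`), and `⊥` otherwise (in particular `vclos ⊥ = ⊥`). -/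
noncomputable def vclos (a : L) : L :=
  if h : ∃ x : L, IsPrincipal x ∧ x ≠ ⊥ ∧ x ≤ a then
    res h.choose (res h.choose a)
  else ⊥

/-- `a` is divisorial if `a = a_v`. -/
def IsDivisorial (a : L) : Prop := vclos a = a

/-- `L` is h-local: every nonzero prime is below a unique maximal element and
every nonzero element is below only finitely many maximal elements. -/
def IsHLocal (L : Type*) [PGCLattice L] : Prop :=
  (∀ r : L, r ≠ ⊥ → IsPrime r → ∃! m : L, IsMaximal m ∧ r ≤ m) ∧
  (∀ b : L, b ≠ ⊥ → {m : L | IsMaximal m ∧ b ≤ m}.Finite)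

end MulLattice

open MulLattice

/-!
Since `m * m ≤ x`, the residual `(x : m)` lies above `m`; it cannot be `1`, for then
`m ≤ x`, so maximality gives `(x : m) = m`. Computing the divisorial closure of `m` with
the principal element `x ≤ m` then gives `m_v = (x : (x : m)) = (x : m) = m`.
That the closure may be computed with any nonzero principal element below `m` rests on
`(x * c : a) = x * (c : a)` for nonzero principal `x, c ≤ a`, together with cancellation
of nonzero principal elements in a lattice domain.
-/

namespace MulLattice

section MulLattice

variable {L : Type*} [MulLattice L]

theorem mul_sup (a b c : L) : a * (b ⊔ c) = a * b ⊔ a * c := by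
  rw [← sSup_pair, mul_sSup, iSup_pair]

instance : MulLeftMono L where
  elim a b c h :=
    calc a * b ≤ a * b ⊔ a * c := le_sup_left
      _ = a * c := by rw [← mul_sup, sup_eq_right.mpr h]

theorem le_res_iff {a y x : L} : a ≤ res y x ↔ a * x ≤ y := by
  refine ⟨fun h => ?_, fun h => le_sSup h⟩
  calc a * x ≤ res y x * x := mul_le_mul_left h x
    _ = ⨆ b ∈ {b : L | b * x ≤ y}, x * b := by rw [mul_comm, res, mul_sSup]
    _ ≤ y := iSup₂_le fun b hb => (mul_comm x b).trans_le hb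

theorem res_mul_le (y x : L) : res y x * x ≤ y :=
  le_res_iff.mp le_rfl

theorem res_anti_right {y a c : L} (h : c ≤ a) : res y a ≤ res y c :=
  le_res_iff.mpr ((mul_le_mul_right h _).trans (res_mul_le y a))

theorem res_mul (y a b : L) : res y (a * b) = res (res y b) a :=
  eq_of_forall_le_iff fun t => by rw [le_res_iff, le_res_iff, le_res_iff, mul_assoc]

theorem res_mul_eq_of_le {c y : L} (hc : IsMeetPrincipal c) (h : y ≤ c) :
    res y c * c = y := by
  have h' := hc y ⊤
  rwa [inf_top_eq, ← one_eq_top, one_mul, inf_eq_left.mpr h, eq_comm] at h'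

theorem res_bot_eq_bot (hL : IsLatticeDomain L) {c : L} (hc0 : c ≠ ⊥) : res ⊥ c = ⊥ :=
  sSup_eq_bot.mpr fun t ht =>
    le_bot_iff.mp ((hL.2 t c ht).resolve_right fun h => hc0 (le_bot_iff.mp h))

theorem res_mul_cancel (hL : IsLatticeDomain L) {c : L} (hc : IsJoinPrincipal c)
    (hc0 : c ≠ ⊥) (y : L) : res (y * c) c = y := by
  simpa [res_bot_eq_bot hL hc0] using (hc y ⊥).symm

theorem res_mul_eq_mul_res (hL : IsLatticeDomain L) {x c a : L} (hx : IsPrincipal x)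
    (hx0 : x ≠ ⊥) (hc : IsJoinPrincipal c) (hc0 : c ≠ ⊥) (hca : c ≤ a) :
    res (x * c) a = x * res c a := by
  have hle : res (x * c) a ≤ x := (res_anti_right hca).trans (res_mul_cancel hL hc hc0 x).le
  calc res (x * c) a = res (res (x * c) a) x * x := (res_mul_eq_of_le hx.1 hle).symm
    _ = res (res (x * c) x) a * x := by rw [← res_mul, ← res_mul, mul_comm a x]
    _ = x * res c a := by rw [mul_comm x c, res_mul_cancel hL hx.2 hx0, mul_comm]

theorem res_res_le_res_res (hL : IsLatticeDomain L) {x c a : L} (hx : IsPrincipal x)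
    (hx0 : x ≠ ⊥) (hc : IsJoinPrincipal c) (hc0 : c ≠ ⊥) (hca : c ≤ a) :
    res c (res c a) ≤ res x (res x a) := by
  set t := res c (res c a)
  have hxac : res x a * c ≤ res (x * c) a := le_res_iff.mpr <| by
    rw [mul_right_comm]; exact mul_le_mul_left (res_mul_le x a) c
  have key : t * res x a * c ≤ x * c :=
    calc t * res x a * c ≤ t * res (x * c) a := by rw [mul_assoc]; exact mul_le_mul_right hxac t
      _ = x * (t * res c a) := by rw [res_mul_eq_mul_res hL hx hx0 hc hc0 hca, mul_left_comm]
      _ ≤ x * c := mul_le_mul_right (res_mul_le c _) x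
  exact le_res_iff.mpr ((le_res_iff.mpr key).trans_eq (res_mul_cancel hL hc hc0 x))

theorem res_eq_self_of_isMaximal {m x : L} (hm : IsMaximal m) (h1 : m * m ≤ x) (h2 : ¬m ≤ x) :
    res x m = m := by
  have hle : m ≤ res x m := le_res_iff.mpr h1
  by_contra hne
  have hone : res x m = 1 := hm.2 _ (lt_of_le_of_ne hle (Ne.symm hne))
  exact h2 (by simpa [hone] using res_mul_le x m)

end MulLattice

theorem vclos_eq_res_res {L : Type*} [PGCLattice L] (hL : IsLatticeDomain L) {x a : L}
    (hx : IsPrincipal x) (hx0 : x ≠ ⊥) (hxa : x ≤ a) : vclos a = res x (res x a) := by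
  have hex : ∃ c : L, IsPrincipal c ∧ c ≠ ⊥ ∧ c ≤ a := ⟨x, hx, hx0, hxa⟩
  rw [vclos, dif_pos hex]
  obtain ⟨hc, hc0, hca⟩ := hex.choose_spec
  exact le_antisymm (res_res_le_res_res hL hx hx0 hc.2 hc0 hca)
    (res_res_le_res_res hL hc hc0 hx.2 hx0 hxa)

end MulLattice

theorem stmt8 {L : Type*} [PGCLattice L] (hL : IsLatticeDomain L)
    (m x : L) (hm : IsMaximal m) (hx : IsPrincipal x)
    (h0 : m * m ≠ ⊥) (h1 : m * m ≤ x) (h2 : x < m) :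
    m = res x m ∧ IsDivisorial m := by
  have hx0 : x ≠ ⊥ := fun h => h0 (le_bot_iff.mp (h ▸ h1))
  have hres : res x m = m := res_eq_self_of_isMaximal hm h1 h2.not_ge
  refine ⟨hres.symm, ?_⟩
  rw [IsDivisorial, vclos_eq_res_res hL hx hx0 h2.le, hres, hres]
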